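/- Bounds on the composite gradient step: let H : E → E be a symmetric positive semidefinite linear map, α > 0, ψ : E → ℝ convex, f : E → ℝ differentiable at x ∈ E, let s be a subgradient of ψ at x, and let x⁺ be a composite step from x with parameters (H, α). Then, with r := ‖x⁺ − x‖, it holds that r ≤ ‖∇f(x) + s‖ / α and ⟨H(x⁺ − x), x⁺ − x⟩ ≤ r · ‖∇f(x) + s‖. -/
import Mathlib


open scoped RealInnerProductSpace
open Real Set

/-- A continuous linear map on `ℝⁿ` is symmetric positive semidefinite. -/
def IsSymmPSD {n : ℕ} (H : EuclideanSpace ℝ (Fin n) →L[ℝ] EuclideanSpace ℝ (Fin n)) : Prop :=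
  (∀ u v, ⟪H u, v⟫ = ⟪u, H v⟫) ∧ ∀ u, 0 ≤ ⟪H u, u⟫

/-- `s` is a subgradient of the convex function `ψ` at `x`. -/
def IsSubgradAt {n : ℕ} (ψ : EuclideanSpace ℝ (Fin n) → ℝ)
    (s x : EuclideanSpace ℝ (Fin n)) : Prop :=
  ∀ y, ψ x + ⟪s, y - x⟫ ≤ ψ y

/-- `xp` is a composite step from `x` with gradient `g`, preconditioner `H`,
regularization `α`, and composite part `ψ`:
`⟨g + (H + αI)(xp − x), y − xp⟩ + ψ(y) ≥ ψ(xp)` for all `y`. -/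
def CompositeStep {n : ℕ} (g : EuclideanSpace ℝ (Fin n))
    (H : EuclideanSpace ℝ (Fin n) →L[ℝ] EuclideanSpace ℝ (Fin n)) (α : ℝ)
    (ψ : EuclideanSpace ℝ (Fin n) → ℝ) (x xp : EuclideanSpace ℝ (Fin n)) : Prop :=
  ∀ y, ψ xp ≤ ⟪g + (H (xp - x) + α • (xp - x)), y - xp⟫ + ψ y

/-- Bounds on the composite gradient step: the step length `r = ‖x⁺ − x‖` satisfies
`r ≤ ‖∇f(x) + s‖/α` and `⟨H(x⁺ − x), x⁺ − x⟩ ≤ r·‖∇f(x) + s‖`. -/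
theorem composite_step_bounds {n : ℕ}
    (f ψ : EuclideanSpace ℝ (Fin n) → ℝ) (hψ : ConvexOn ℝ Set.univ ψ)
    (x xp g s : EuclideanSpace ℝ (Fin n))
    (hg : HasGradientAt f g x)
    (hs : IsSubgradAt ψ s x)
    (H : EuclideanSpace ℝ (Fin n) →L[ℝ] EuclideanSpace ℝ (Fin n)) (hH : IsSymmPSD H)
    (α : ℝ) (hα : 0 < α)
    (hstep : CompositeStep g H α ψ x xp) :
    ‖xp - x‖ ≤ ‖g + s‖ / α ∧ ⟪H (xp - x), xp - x⟫ ≤ ‖xp - x‖ * ‖g + s‖ := by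

  set d := xp - x with hd
  have h1 := hstep x
  have h2 := hs xp
  -- key: α‖d‖² + ⟪H d, d⟫ ≤ -⟪g+s, d⟫
  have hkey : α * ‖d‖ ^ 2 + ⟪H d, d⟫ ≤ ‖g + s‖ * ‖d‖ := by
    have hxm : x - xp = -d := (neg_sub xp x).symm
    have e1 : ⟪g + (H d + α • d), x - xp⟫ =
        -⟪g, d⟫ - ⟪H d, d⟫ - α * ⟪d, d⟫ := by
      rw [hxm]
      simp [inner_add_left, inner_neg_right, inner_smul_left]
      ring
    have e2 : ⟪s, xp - x⟫ = ⟪s, d⟫ := rfl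
    have hsum : ⟪g, d⟫ + ⟪s, d⟫ + ⟪H d, d⟫ + α * ⟪d, d⟫ ≤ 0 := by
      have := h1
      rw [e1] at this
      have h2' := h2
      rw [e2] at h2'
      linarith
    have hgs : ⟪g + s, d⟫ = ⟪g, d⟫ + ⟪s, d⟫ := inner_add_left _ _ _
    have hdd : ⟪d, d⟫ = ‖d‖ ^ 2 := real_inner_self_eq_norm_sq d
    have hcs : -⟪g + s, d⟫ ≤ ‖g + s‖ * ‖d‖ := by
      have := abs_real_inner_le_norm (g + s) d
      have := neg_abs_le ⟪g + s, d⟫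
      linarith [abs_real_inner_le_norm (g + s) d, neg_abs_le ⟪g + s, d⟫]
    nlinarith [hsum, hgs, hdd, hcs]
  have hpsd : 0 ≤ ⟪H d, d⟫ := hH.2 d
  constructor
  · rcases eq_or_ne d 0 with h0 | h0
    · rw [h0]
      simp
      positivity
    · have hdpos : 0 < ‖d‖ := norm_pos_iff.mpr h0
      rw [le_div_iff₀ hα]
      nlinarith
  · nlinarith [norm_nonneg d, norm_nonneg (g + s)]
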